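/- arXiv:2009.11374 — 2 statements merged into one kernel-verified Lean document; each statement's English description precedes it below -/
import Mathlib

section
/- Let T, T̂ : ℝ → ℝ⁴ˣ⁴ be differentiable curves with T(t) ∈ SE(3) for all t, satisfying the true kinematics Ṫ = T[U]∧ and the observer kinematics Ṫ̂ = T̂[U_m − b̂ − W]∧, where the measured velocity is U_m = U + b for a constant bias b ∈ ℝ⁶, and b̂, W : ℝ → ℝ⁶. Let b̃ = b − b̂. Then the pose error T̃ = T̂ T⁻¹ satisfies the error dynamics Ṫ̃(t) = T̂(t)[b̃(t) − W(t)]∧ T̂(t)⁻¹ T̃(t) for all t. -/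
/-! By the product rule, `d(T̂ T⁻¹) = Ṫ̂ T⁻¹ + T̂ d(T⁻¹)` with `d(T⁻¹) = -T⁻¹ Ṫ T⁻¹ = -[U]∧ T⁻¹`.
Since `[·]∧` is additive, the true velocity `U` in `U_m − b̂ − W = U + (b̃ − W)` cancels, leaving
`T̂ [b̃ − W]∧ T⁻¹ = T̂ [b̃ − W]∧ T̂⁻¹ T̃`. The inverse is differentiable because its entries are
`det⁻¹` times cofactors, and `det T = det R = 1` on `SE(3)`. -/

open Matrix Real Filter Topology

/-- Skew-symmetric (cross-product) matrix `[y]×`. -/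
def skew (y : Fin 3 → ℝ) : Matrix (Fin 3) (Fin 3) ℝ :=
  !![0, -y 2, y 1; y 2, 0, -y 0; -y 1, y 0, 0]

/-- Homogeneous transformation matrix `[[R, P],[0,1]]`. -/
def hom (R : Matrix (Fin 3) (Fin 3) ℝ) (P : Fin 3 → ℝ) :
    Matrix (Fin 3 ⊕ Fin 1) (Fin 3 ⊕ Fin 1) ℝ :=
  Matrix.fromBlocks R (Matrix.replicateCol (Fin 1) P) 0 1

/-- Wedge map `[U]∧` for `U = (u₁, u₂) ∈ ℝ⁶`. -/
def wedge (u₁ u₂ : Fin 3 → ℝ) : Matrix (Fin 3 ⊕ Fin 1) (Fin 3 ⊕ Fin 1) ℝ :=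
  Matrix.fromBlocks (skew u₁) (Matrix.replicateCol (Fin 1) u₂) 0 0

/-- Euclidean norm on ℝ³: `‖v‖ = √(vᵀ v)`. -/
noncomputable def norm3 (v : Fin 3 → ℝ) : ℝ := Real.sqrt (v ⬝ᵥ v)

/-- Rodrigues (angle-axis) rotation matrix. -/
noncomputable def rodrigues (θ : ℝ) (x : Fin 3 → ℝ) : Matrix (Fin 3) (Fin 3) ℝ :=
  1 + Real.sin θ • skew x + (1 - Real.cos θ) • (skew x * skew x)

/-- Homogeneous 4-vector `(v, a)ᵀ`. -/
def vec4 (v : Fin 3 → ℝ) (a : ℝ) : Fin 3 ⊕ Fin 1 → ℝ := Sum.elim v (fun _ => a)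

lemma skew_add (a b : Fin 3 → ℝ) : skew (a + b) = skew a + skew b := by
  ext i j
  fin_cases i <;> fin_cases j <;> simp [skew] <;> ring

lemma wedge_add (a b c d : Fin 3 → ℝ) :
    wedge (a + b) (c + d) = wedge a c + wedge b d := by
  ext i j
  rcases i with i | i <;> rcases j with j | j <;> simp [wedge, skew_add, Matrix.replicateCol]

lemma det_hom (R : Matrix (Fin 3) (Fin 3) ℝ) (P : Fin 3 → ℝ) : (hom R P).det = R.det := by
  simp [hom]

section EntrywiseDeriv

variable {𝕜 : Type*} [NontriviallyNormedField 𝕜] {l m n : Type*}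

-- Mathlib puts no global norm on matrices, so matrix curves are differentiated entry by entry,
-- which is also how the kinematics are stated.
def HasEntrywiseDerivAt (A : 𝕜 → Matrix m n 𝕜) (A' : Matrix m n 𝕜) (t : 𝕜) : Prop :=
  ∀ i j, HasDerivAt (fun s => A s i j) (A' i j) t

namespace HasEntrywiseDerivAt

variable {A : 𝕜 → Matrix l m 𝕜} {A' : Matrix l m 𝕜} {t : 𝕜}

theorem unique {A'' : Matrix l m 𝕜} (h : HasEntrywiseDerivAt A A' t)
    (h' : HasEntrywiseDerivAt A A'' t) : A' = A'' :=
  Matrix.ext fun i j => (h i j).unique (h' i j)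

theorem mul [Fintype m] {B : 𝕜 → Matrix m n 𝕜} {B' : Matrix m n 𝕜}
    (hA : HasEntrywiseDerivAt A A' t) (hB : HasEntrywiseDerivAt B B' t) :
    HasEntrywiseDerivAt (fun s => A s * B s) (A' * B t + A t * B') t := by
  intro i j
  simp only [Matrix.add_apply, Matrix.mul_apply, ← Finset.sum_add_distrib]
  exact HasDerivAt.fun_sum fun k _ => (hA i k).mul (hB k j)

end HasEntrywiseDerivAt

variable [Fintype n] [DecidableEq n]

theorem differentiableAt_det {A : 𝕜 → Matrix n n 𝕜} {t : 𝕜}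
    (hA : ∀ i j, DifferentiableAt 𝕜 (fun s => A s i j) t) :
    DifferentiableAt 𝕜 (fun s => (A s).det) t := by
  simp only [Matrix.det_apply']
  fun_prop

theorem differentiableAt_adjugate_apply {A : 𝕜 → Matrix n n 𝕜} {t : 𝕜}
    (hA : ∀ i j, DifferentiableAt 𝕜 (fun s => A s i j) t) (i j : n) :
    DifferentiableAt 𝕜 (fun s => (A s).adjugate i j) t := by
  simp only [Matrix.adjugate_apply]
  refine differentiableAt_det fun k l => ?_
  simp only [Matrix.updateRow_apply]
  split_ifs
  · exact differentiableAt_const _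
  · exact hA k l

theorem HasEntrywiseDerivAt.inv {A : 𝕜 → Matrix n n 𝕜} {A' : Matrix n n 𝕜} {t : 𝕜}
    (hA : HasEntrywiseDerivAt A A' t) (hdet : IsUnit (A t).det) :
    HasEntrywiseDerivAt (fun s => (A s)⁻¹) (-(A t)⁻¹ * A' * (A t)⁻¹) t := by
  have hdiff i j : DifferentiableAt 𝕜 (fun s => A s i j) t := (hA i j).differentiableAt
  have hinv : HasEntrywiseDerivAt (fun s => (A s)⁻¹)
      (Matrix.of fun i j => deriv (fun s => (A s)⁻¹ i j) t) t := by
    intro i j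
    simp only [Matrix.inv_def, Ring.inverse_eq_inv', Matrix.smul_apply, smul_eq_mul,
      Matrix.of_apply]
    exact (((differentiableAt_det hdiff).inv hdet.ne_zero).mul
      (differentiableAt_adjugate_apply hdiff i j)).hasDerivAt
  set B' := Matrix.of fun i j => deriv (fun s => (A s)⁻¹ i j) t
  have hmul_inv : ∀ᶠ s in 𝓝 t, A s * (A s)⁻¹ = 1 := by
    filter_upwards [(differentiableAt_det hdiff).continuousAt.eventually_ne hdet.ne_zero]
      with s hs using Matrix.mul_nonsing_inv _ (isUnit_iff_ne_zero.mpr hs)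
  have hconst : HasEntrywiseDerivAt (fun s => A s * (A s)⁻¹) 0 t := fun i j =>
    (hasDerivAt_const t ((1 : Matrix n n 𝕜) i j)).congr_of_eventuallyEq
      (hmul_inv.mono fun s hs => by simp only [hs])
  have hsum : A' * (A t)⁻¹ + A t * B' = 0 := (hA.mul hinv).unique hconst
  have hB' : B' = -(A t)⁻¹ * A' * (A t)⁻¹ := calc
    B' = (A t)⁻¹ * (A t * B') := by
      rw [← Matrix.mul_assoc, Matrix.nonsing_inv_mul _ hdet, Matrix.one_mul]
    _ = -(A t)⁻¹ * A' * (A t)⁻¹ := by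
      rw [eq_neg_of_add_eq_zero_right hsum]; noncomm_ring
  rwa [← hB']

end EntrywiseDeriv

/-- with true kinematics `Ṫ = T[U]∧`, observer kinematics
`Ṫ̂ = T̂[U_m − b̂ − W]∧`, measured velocity `U_m = U + b` (constant bias `b`), and
bias error `b̃ = b − b̂`, the pose error `T̃ = T̂ T⁻¹` satisfies
`Ṫ̃ = T̂ [b̃ − W]∧ T̂⁻¹ T̃`. -/
theorem pose_error_dynamics (U₁ U₂ : ℝ → Fin 3 → ℝ) (b₁ b₂ : Fin 3 → ℝ)
    (bh₁ bh₂ W₁ W₂ : ℝ → Fin 3 → ℝ)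
    (T Th : ℝ → Matrix (Fin 3 ⊕ Fin 1) (Fin 3 ⊕ Fin 1) ℝ)
    (hSE : ∀ t, ∃ (Rt : Matrix (Fin 3) (Fin 3) ℝ) (Pt : Fin 3 → ℝ),
      (Rt * Rtᵀ = 1 ∧ Rt.det = 1) ∧ T t = hom Rt Pt)
    (hSEh : ∀ t, ∃ (Rt : Matrix (Fin 3) (Fin 3) ℝ) (Pt : Fin 3 → ℝ),
      (Rt * Rtᵀ = 1 ∧ Rt.det = 1) ∧ Th t = hom Rt Pt)
    (hT : ∀ t i j, HasDerivAt (fun s => T s i j) ((T t * wedge (U₁ t) (U₂ t)) i j) t)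
    (hTh : ∀ t i j, HasDerivAt (fun s => Th s i j)
      ((Th t * wedge ((U₁ t + b₁) - bh₁ t - W₁ t) ((U₂ t + b₂) - bh₂ t - W₂ t)) i j) t) :
    ∀ t i j, HasDerivAt (fun s => (Th s * (T s)⁻¹) i j)
      ((Th t * wedge ((b₁ - bh₁ t) - W₁ t) ((b₂ - bh₂ t) - W₂ t) * (Th t)⁻¹ *
        (Th t * (T t)⁻¹)) i j) t := by
  intro t
  obtain ⟨R, P, ⟨-, hR⟩, hTt⟩ := hSE t
  obtain ⟨Rh, Ph, ⟨-, hRh⟩, hTht⟩ := hSEh t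
  have hTunit : IsUnit (T t).det := by rw [hTt, det_hom, hR]; exact isUnit_one
  have hThunit : IsUnit (Th t).det := by rw [hTht, det_hom, hRh]; exact isUnit_one
  have hsplit : wedge (U₁ t + b₁ - bh₁ t - W₁ t) (U₂ t + b₂ - bh₂ t - W₂ t) =
      wedge (U₁ t) (U₂ t) + wedge (b₁ - bh₁ t - W₁ t) (b₂ - bh₂ t - W₂ t) := by
    rw [← wedge_add]; congr 1 <;> abel
  show HasEntrywiseDerivAt (fun s => Th s * (T s)⁻¹) _ t
  convert HasEntrywiseDerivAt.mul (hTh t) (HasEntrywiseDerivAt.inv (hT t) hTunit) using 1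
  rw [hsplit]
  simp only [neg_mul, Matrix.mul_neg, Matrix.mul_add, Matrix.add_mul, Matrix.mul_assoc,
    Matrix.nonsing_inv_mul_cancel_left _ _ hTunit, Matrix.nonsing_inv_mul_cancel_left _ _ hThunit]
  abel
end

section
/- Let R, R̂ : ℝ → SO(3) and P, P̂, p̂ᵢ : ℝ → ℝ³ be differentiable, where the true pose satisfies Ṙ = R[Ω]×, Ṗ = R V, the observer satisfies Ṙ̂ = R̂[Ω_m − b̂_Ω − W_Ω]×, Ṗ̂ = R̂(V_m − b̂_V − W_V) with Ω_m = Ω + b_Ω, V_m = V + b_V for constant biases b_Ω, b_V ∈ ℝ³, and the landmark pᵢ ∈ ℝ³ is constant. Define yᵢ = Rᵀ(pᵢ − P), eᵢ = p̂ᵢ − (R̂ yᵢ + P̂), b̃_Ω = b_Ω − b̂_Ω, b̃_V = b_V − b̂_V. Then the error dynamics are ėᵢ(t) = ṗ̂ᵢ(t) + R̂(t)[yᵢ(t)]×(b̃_Ω(t) − W_Ω(t)) − R̂(t)(b̃_V(t) − W_V(t)) for all t. -/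
open Matrix Real Filter Topology

/-!
Differentiating `y = Rᵀ (p - P)` gives the body-frame landmark kinematics `ẏ = -Ω × y - V`,
using `RᵀR = 1` for the translational term. In `ė = ṗ̂ - (Ṙ̂ y + R̂ ẏ + Ṗ̂)` the true velocities
`Ω` and `V` then cancel between the true and observer kinematics, and what remains of the
rotational term, `R̂ ((b̃_Ω - W_Ω) × y)`, equals `-R̂ [y]× (b̃_Ω - W_Ω)` by anticommutativity.
-/

theorem skew_mulVec (a b : Fin 3 → ℝ) : skew a *ᵥ b = a ⨯₃ b := by
  ext i
  fin_cases i <;> simp [skew, cross_apply, mulVec, dotProduct, Fin.sum_univ_three] <;> ring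

theorem skew_transpose (a : Fin 3 → ℝ) : (skew a)ᵀ = -skew a := by
  ext i j
  fin_cases i <;> fin_cases j <;> simp [skew]

theorem hasDerivAt_mulVec {𝕜 : Type*} [NontriviallyNormedField 𝕜] {m n : Type*} [Fintype n]
    {M : 𝕜 → Matrix m n 𝕜} {M' : Matrix m n 𝕜} {v : 𝕜 → n → 𝕜} {v' : n → 𝕜} {t : 𝕜}
    (hM : ∀ i j, HasDerivAt (fun s => M s i j) (M' i j) t) (hv : HasDerivAt v v' t) :
    HasDerivAt (fun s => M s *ᵥ v s) (M' *ᵥ v t + M t *ᵥ v') t := by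
  refine hasDerivAt_pi.2 fun i => ?_
  have hsum := HasDerivAt.fun_sum fun k (_ : k ∈ Finset.univ) =>
    (hM i k).fun_mul (hasDerivAt_pi.1 hv k)
  refine hsum.congr_deriv ?_
  simp only [Pi.add_apply, mulVec, dotProduct, Finset.sum_add_distrib]

theorem hasDerivAt_body_landmark {R : ℝ → Matrix (Fin 3) (Fin 3) ℝ} {P : ℝ → Fin 3 → ℝ}
    {Ω V : Fin 3 → ℝ} {p : Fin 3 → ℝ} {t : ℝ} (horth : R t * (R t)ᵀ = 1)
    (hR : ∀ i j, HasDerivAt (fun s => R s i j) ((R t * skew Ω) i j) t)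
    (hP : HasDerivAt P (R t *ᵥ V) t) :
    HasDerivAt (fun s => (R s)ᵀ *ᵥ (p - P s))
      (-(Ω ⨯₃ ((R t)ᵀ *ᵥ (p - P t))) - V) t := by
  refine (hasDerivAt_mulVec (M := fun s => (R s)ᵀ) (M' := (R t * skew Ω)ᵀ) (fun i j => hR j i)
    ((hasDerivAt_const t p).fun_sub hP)).congr_deriv ?_
  rw [zero_sub, transpose_mul, skew_transpose, neg_mul, neg_mulVec, ← mulVec_mulVec,
    skew_mulVec, mulVec_neg, mulVec_mulVec, mul_eq_one_comm.mp horth, one_mulVec]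
  exact (sub_eq_add_neg _ _).symm

theorem landmark_rate_cancel (Ω b y V v : Fin 3 → ℝ) :
    (Ω + b) ⨯₃ y + (-(Ω ⨯₃ y) - V) + (V + v) = -(y ⨯₃ b) + v := by
  rw [LinearMap.map_add₂, ← cross_anticomm b y]
  abel

theorem landmark_error_dynamics_general
    (R Rh : ℝ → Matrix (Fin 3) (Fin 3) ℝ) (P Ph ph : ℝ → Fin 3 → ℝ)
    (Ω V : ℝ → Fin 3 → ℝ) (bΩ bV : Fin 3 → ℝ)
    (bhΩ bhV WΩ WV : ℝ → Fin 3 → ℝ) (p : Fin 3 → ℝ) (ph' : ℝ → Fin 3 → ℝ)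
    (hSO : ∀ t, R t * (R t)ᵀ = 1 ∧ (R t).det = 1)
    (hR : ∀ t i j, HasDerivAt (fun s => R s i j) ((R t * skew (Ω t)) i j) t)
    (hP : ∀ t j, HasDerivAt (fun s => P s j) ((R t *ᵥ V t) j) t)
    (hRh : ∀ t i j, HasDerivAt (fun s => Rh s i j)
      ((Rh t * skew ((Ω t + bΩ) - bhΩ t - WΩ t)) i j) t)
    (hPh : ∀ t j, HasDerivAt (fun s => Ph s j)
      ((Rh t *ᵥ ((V t + bV) - bhV t - WV t)) j) t)
    (hph : ∀ t j, HasDerivAt (fun s => ph s j) (ph' t j) t)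
    (y e : ℝ → Fin 3 → ℝ)
    (hy : ∀ t, y t = (R t)ᵀ *ᵥ (p - P t))
    (he : ∀ t, e t = ph t - (Rh t *ᵥ y t + Ph t)) :
    ∀ t j, HasDerivAt (fun s => e s j)
      ((ph' t + (Rh t * skew (y t)) *ᵥ ((bΩ - bhΩ t) - WΩ t)
        - Rh t *ᵥ ((bV - bhV t) - WV t)) j) t := by
  intro t
  have hy' : HasDerivAt y (-(Ω t ⨯₃ y t) - V t) t := by
    have h := hasDerivAt_body_landmark (p := p) (hSO t).1 (hR t) (hasDerivAt_pi.2 (hP t))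
    rwa [← funext hy, ← hy t] at h
  have he' : HasDerivAt e (ph' t - ((Rh t * skew ((Ω t + bΩ) - bhΩ t - WΩ t)) *ᵥ y t
      + Rh t *ᵥ (-(Ω t ⨯₃ y t) - V t) + Rh t *ᵥ ((V t + bV) - bhV t - WV t))) t := by
    rw [funext he]
    exact (hasDerivAt_pi.2 (hph t)).sub
      ((hasDerivAt_mulVec (hRh t) hy').add (hasDerivAt_pi.2 (hPh t)))
  refine hasDerivAt_pi.1 (he'.congr_deriv ?_)
  have hrot : (Ω t + bΩ) - bhΩ t - WΩ t = Ω t + ((bΩ - bhΩ t) - WΩ t) := by abel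
  have htrans : (V t + bV) - bhV t - WV t = V t + ((bV - bhV t) - WV t) := by abel
  rw [hrot, htrans, ← mulVec_mulVec, ← mulVec_mulVec, skew_mulVec, skew_mulVec,
    ← mulVec_add, ← mulVec_add, landmark_rate_cancel, mulVec_add, mulVec_neg]
  abel

/-- the landmark-error dynamics. With true kinematics `Ṙ = R[Ω]×`,
`Ṗ = R V`, observer kinematics `Ṙ̂ = R̂[Ω_m − b̂_Ω − W_Ω]×`, `Ṗ̂ = R̂(V_m − b̂_V − W_V)`,
`Ω_m = Ω + b_Ω`, `V_m = V + b_V`, a fixed landmark `p`, `y = Rᵀ(p − P)`,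
`e = p̂ − (R̂ y + P̂)`, `b̃_Ω = b_Ω − b̂_Ω`, `b̃_V = b_V − b̂_V`:
`ė = ṗ̂ + R̂ [y]× (b̃_Ω − W_Ω) − R̂ (b̃_V − W_V)`. -/
theorem landmark_error_dynamics
    (R Rh : ℝ → Matrix (Fin 3) (Fin 3) ℝ) (P Ph ph : ℝ → Fin 3 → ℝ)
    (Ω V : ℝ → Fin 3 → ℝ) (bΩ bV : Fin 3 → ℝ)
    (bhΩ bhV WΩ WV : ℝ → Fin 3 → ℝ) (p : Fin 3 → ℝ) (ph' : ℝ → Fin 3 → ℝ)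
    (hSO : ∀ t, R t * (R t)ᵀ = 1 ∧ (R t).det = 1)
    (hSOh : ∀ t, Rh t * (Rh t)ᵀ = 1 ∧ (Rh t).det = 1)
    (hR : ∀ t i j, HasDerivAt (fun s => R s i j) ((R t * skew (Ω t)) i j) t)
    (hP : ∀ t j, HasDerivAt (fun s => P s j) ((R t *ᵥ V t) j) t)
    (hRh : ∀ t i j, HasDerivAt (fun s => Rh s i j)
      ((Rh t * skew ((Ω t + bΩ) - bhΩ t - WΩ t)) i j) t)
    (hPh : ∀ t j, HasDerivAt (fun s => Ph s j)
      ((Rh t *ᵥ ((V t + bV) - bhV t - WV t)) j) t)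
    (hph : ∀ t j, HasDerivAt (fun s => ph s j) (ph' t j) t)
    (y e : ℝ → Fin 3 → ℝ)
    (hy : ∀ t, y t = (R t)ᵀ *ᵥ (p - P t))
    (he : ∀ t, e t = ph t - (Rh t *ᵥ y t + Ph t)) :
    ∀ t j, HasDerivAt (fun s => e s j)
      ((ph' t + (Rh t * skew (y t)) *ᵥ ((bΩ - bhΩ t) - WΩ t)
        - Rh t *ᵥ ((bV - bhV t) - WV t)) j) t :=
  landmark_error_dynamics_general R Rh P Ph ph Ω V bΩ bV bhΩ bhV WΩ WV p ph' hSO hR hP hRh hPh hph y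
    e hy he
end
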